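/- Let 1 ≤ k < d and assume λ₂ > 0 (which holds by irreducibility and aperiodicity of P). Let u₁, …, u_k ∈ ℝ^d be Φ-orthonormal eigenvectors of L (u_iᵀΦu_j = δ_{ij}, L u_i = λ_i u_i) associated with the k smallest eigenvalues, let Ψ = (u₁, …, u_k), and let v_k = Ψ Ψᵀ Φ v be the Φ-weighted least-squares approximation of v using these eigenvectors. Then ‖v − v_k‖²_Φ ≤ ‖r̄‖²_Φ / (λ₂ λ_{k+1}). -/
import Mathlib


open Matrix Finset

noncomputable def phiNorm {d : ℕ} (Φ : Matrix (Fin d) (Fin d) ℝ) (x : Fin d → ℝ) : ℝ :=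
  Real.sqrt (x ⬝ᵥ (Φ *ᵥ x))

theorem stmt1 {d : ℕ} (hd : 2 ≤ d)
    (P : Matrix (Fin d) (Fin d) ℝ)
    (hP_nonneg : ∀ i j, 0 ≤ P i j)
    (hP_row : ∀ i, ∑ j, P i j = 1)
    (hP_erg : ∃ n : ℕ, 1 ≤ n ∧ ∀ i j, 0 < (P ^ n) i j)
    (φ : Fin d → ℝ)
    (hφ_pos : ∀ i, 0 < φ i)
    (hφ_sum : ∑ i, φ i = 1)
    (hφ_stat : φ ᵥ* P = φ)
    (Φ : Matrix (Fin d) (Fin d) ℝ) (hΦ : Φ = Matrix.diagonal φ)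
    (L : Matrix (Fin d) (Fin d) ℝ)
    (hL : L = 1 - (2⁻¹ : ℝ) • (P + Φ⁻¹ * Pᵀ * Φ))
    (lam : Fin d → ℝ) (u : Fin d → Fin d → ℝ)
    (hlam_mono : Monotone lam)
    (hlam_zero : lam ⟨0, by omega⟩ = 0)
    (h_eig : ∀ i, L *ᵥ u i = lam i • u i)
    (h_orth : ∀ i j, (u i) ⬝ᵥ (Φ *ᵥ u j) = if i = j then 1 else 0)
    (hlam2_pos : 0 < lam ⟨1, by omega⟩)
    (k : ℕ) (hk1 : 1 ≤ k) (hkd : k < d)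
    (r rbar : Fin d → ℝ)
    (hrbar : rbar = r - (φ ⬝ᵥ r) • (fun _ => (1 : ℝ)))
    (v : Fin d → ℝ)
    (hv : v = rbar + P *ᵥ v)
    (hv0 : φ ⬝ᵥ v = 0)
    (Ψ : Matrix (Fin d) (Fin k) ℝ)
    (hΨ : Ψ = Matrix.of fun s i => u (Fin.castLE hkd.le i) s)
    (vk : Fin d → ℝ)
    (hvk : vk = (Ψ * Ψᵀ * Φ) *ᵥ v) :
    (phiNorm Φ (v - vk)) ^ 2
      ≤ (phiNorm Φ rbar) ^ 2 / (lam ⟨1, by omega⟩ * lam ⟨k, hkd⟩) := by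
  classical
  have h0d : (0:ℕ) < d := by omega
  have h1d : (1:ℕ) < d := by omega
  -- Φ basics
  have hΦdet : Φ.det ≠ 0 := by
    rw [hΦ, Matrix.det_diagonal]
    exact ne_of_gt (Finset.prod_pos fun i _ => hφ_pos i)
  have hΦunit : IsUnit Φ.det := isUnit_iff_ne_zero.mpr hΦdet
  have hΦinv : Φ * Φ⁻¹ = 1 := Matrix.mul_nonsing_inv _ hΦunit
  have hΦinv' : Φ⁻¹ * Φ = 1 := Matrix.nonsing_inv_mul _ hΦunit
  set U : Matrix (Fin d) (Fin d) ℝ := Matrix.of u with hU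
  have hUorth : U * (Φ * Uᵀ) = 1 := by
    ext i j
    have := h_orth i j
    simpa [Matrix.mul_apply, Matrix.mulVec, dotProduct, Matrix.one_apply, hU,
      Matrix.transpose_apply] using this
  have hUorth' : U * Φ * Uᵀ = 1 := by rw [Matrix.mul_assoc]; exact hUorth
  have hUU : Φ * Uᵀ * U = 1 := mul_eq_one_comm.mp hUorth
  have hΦinj : ∀ x y : Fin d → ℝ, Φ *ᵥ x = Φ *ᵥ y → x = y := by
    intro x y h
    funext s
    have h2 := congrFun h s
    rw [hΦ] at h2
    simp only [Matrix.mulVec_diagonal] at h2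
    exact mul_left_cancel₀ (ne_of_gt (hφ_pos s)) h2
  have hcomp : ∀ w : Fin d → ℝ, Uᵀ *ᵥ (U *ᵥ (Φ *ᵥ w)) = w := by
    intro w
    apply hΦinj
    calc Φ *ᵥ (Uᵀ *ᵥ (U *ᵥ (Φ *ᵥ w))) = (Φ * Uᵀ * U) *ᵥ (Φ *ᵥ w) := by
          rw [Matrix.mulVec_mulVec, Matrix.mulVec_mulVec]
      _ = Φ *ᵥ w := by rw [hUU, Matrix.one_mulVec]
  have hcomp2 : ∀ y : Fin d → ℝ, U *ᵥ (Φ *ᵥ (Uᵀ *ᵥ y)) = y := by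
    intro y
    calc U *ᵥ (Φ *ᵥ (Uᵀ *ᵥ y)) = (U * Φ * Uᵀ) *ᵥ y := by
          rw [Matrix.mulVec_mulVec, Matrix.mulVec_mulVec]
      _ = y := by rw [hUorth', Matrix.one_mulVec]
  have hform : ∀ a b : Fin d → ℝ, (Uᵀ *ᵥ a) ⬝ᵥ (Φ *ᵥ (Uᵀ *ᵥ b)) = a ⬝ᵥ b := by
    intro a b
    rw [Matrix.mulVec_mulVec, Matrix.mulVec_transpose, Matrix.dotProduct_mulVec,
      Matrix.vecMul_vecMul, ← Matrix.dotProduct_mulVec, hUorth, Matrix.one_mulVec]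
  -- eigen relation in matrix form
  have hLU : L * Uᵀ = Uᵀ * Matrix.diagonal lam := by
    ext s i
    rw [Matrix.mul_diagonal]
    have h := congrFun (h_eig i) s
    simp only [Matrix.mulVec, dotProduct, Pi.smul_apply, smul_eq_mul] at h
    simp only [Matrix.mul_apply, Matrix.transpose_apply, hU, Matrix.of_apply]
    rw [h]; ring
  set c : Fin d → ℝ := U *ᵥ (Φ *ᵥ v) with hc
  have hvdec : v = Uᵀ *ᵥ c := (hcomp v).symm
  -- S identity
  set S : ℝ := ∑ i, lam i * (c i)^2 with hS
  have hScc : v ⬝ᵥ (Φ *ᵥ (L *ᵥ v)) = S := by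
    have h1 : L *ᵥ v = Uᵀ *ᵥ (Matrix.diagonal lam *ᵥ c) := by
      rw [hvdec, Matrix.mulVec_mulVec, hLU, ← Matrix.mulVec_mulVec]
    rw [h1]
    rw [hvdec]
    rw [hform]
    simp only [dotProduct, Matrix.mulVec_diagonal, hS]
    exact Finset.sum_congr rfl fun i _ => by ring
  have hPoisson : v - P *ᵥ v = rbar := by
    nth_rewrite 1 [hv]; abel
  have key1 : Φ *ᵥ ((Φ⁻¹ * Pᵀ * Φ) *ᵥ v) = Pᵀ *ᵥ (Φ *ᵥ v) := by
    rw [Matrix.mulVec_mulVec, ← Matrix.mul_assoc, ← Matrix.mul_assoc, hΦinv, Matrix.one_mul,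
      ← Matrix.mulVec_mulVec]
  have key2 : v ⬝ᵥ (Pᵀ *ᵥ (Φ *ᵥ v)) = v ⬝ᵥ (Φ *ᵥ (P *ᵥ v)) := by
    rw [Matrix.dotProduct_mulVec (w := Φ *ᵥ v), Matrix.vecMul_transpose]
    rw [Matrix.dotProduct_mulVec (w := P *ᵥ v)]
    have hΦsymm : v ᵥ* Φ = Φ *ᵥ v := by
      rw [← Matrix.vecMul_transpose]
      congr 1
      rw [hΦ, Matrix.diagonal_transpose]
    rw [hΦsymm, dotProduct_comm]
  have hSr : S = v ⬝ᵥ (Φ *ᵥ rbar) := by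
    rw [← hScc]
    have hLv : L *ᵥ v = v - (2⁻¹:ℝ) • (P *ᵥ v) - (2⁻¹:ℝ) • ((Φ⁻¹ * Pᵀ * Φ) *ᵥ v) := by
      rw [hL, Matrix.sub_mulVec, Matrix.one_mulVec, Matrix.smul_mulVec,
        Matrix.add_mulVec, smul_add]
      abel
    rw [hLv]
    have hdist : Φ *ᵥ (v - (2⁻¹:ℝ) • (P *ᵥ v) - (2⁻¹:ℝ) • ((Φ⁻¹ * Pᵀ * Φ) *ᵥ v))
        = Φ *ᵥ v - (2⁻¹:ℝ) • (Φ *ᵥ (P *ᵥ v)) - (2⁻¹:ℝ) • (Pᵀ *ᵥ (Φ *ᵥ v)) := by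
      rw [← key1]
      simp [Matrix.mulVec_sub, Matrix.mulVec_smul]
    rw [hdist]
    have e1 : v ⬝ᵥ (Φ *ᵥ v - (2⁻¹:ℝ) • (Φ *ᵥ (P *ᵥ v)) - (2⁻¹:ℝ) • (Pᵀ *ᵥ (Φ *ᵥ v)))
        = v ⬝ᵥ (Φ *ᵥ v) - (2⁻¹:ℝ) * (v ⬝ᵥ (Φ *ᵥ (P *ᵥ v)))
          - (2⁻¹:ℝ) * (v ⬝ᵥ (Pᵀ *ᵥ (Φ *ᵥ v))) := by
      simp [dotProduct_sub, dotProduct_smul, smul_eq_mul]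
    rw [e1, key2, ← hPoisson, Matrix.mulVec_sub, dotProduct_sub]
    ring
  -- c 0 = 0
  have hL1 : L *ᵥ (fun _ => (1:ℝ)) = 0 := by
    have hP1 : P *ᵥ (fun _ => (1:ℝ)) = fun _ => (1:ℝ) := by
      funext i
      simp only [Matrix.mulVec, dotProduct, mul_one]
      exact hP_row i
    have hΦ1 : Φ *ᵥ (fun _ => (1:ℝ)) = φ := by
      funext i; rw [hΦ]; simp [Matrix.mulVec_diagonal]
    have hPt : Pᵀ *ᵥ φ = φ := by rw [Matrix.mulVec_transpose, hφ_stat]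
    have hΦiφ : Φ⁻¹ *ᵥ φ = fun _ => (1:ℝ) := by
      have h2 : Φ⁻¹ *ᵥ (Φ *ᵥ (fun _ => (1:ℝ))) = fun _ => (1:ℝ) := by
        rw [Matrix.mulVec_mulVec, hΦinv', Matrix.one_mulVec]
      rwa [hΦ1] at h2
    have hX : (Φ⁻¹ * Pᵀ * Φ) *ᵥ (fun _ => (1:ℝ)) = fun _ => (1:ℝ) := by
      rw [← Matrix.mulVec_mulVec, ← Matrix.mulVec_mulVec, hΦ1, hPt, hΦiφ]
    rw [hL, Matrix.sub_mulVec, Matrix.one_mulVec, Matrix.smul_mulVec,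
      Matrix.add_mulVec, hP1, hX]
    funext i
    simp
    norm_num
  set a : Fin d → ℝ := U *ᵥ (Φ *ᵥ (fun _ => (1:ℝ))) with ha
  have hone : (fun _ => (1:ℝ)) = Uᵀ *ᵥ a := (hcomp _).symm
  have hDa : Matrix.diagonal lam *ᵥ a = 0 := by
    have h2 : Uᵀ *ᵥ (Matrix.diagonal lam *ᵥ a) = 0 := by
      have h3 : L *ᵥ (Uᵀ *ᵥ a) = 0 := by rw [← hone]; exact hL1
      rwa [Matrix.mulVec_mulVec, hLU, ← Matrix.mulVec_mulVec] at h3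
    have h4 := congrArg (fun y => U *ᵥ (Φ *ᵥ y)) h2
    simp only [hcomp2] at h4
    rw [h4]
    simp [Matrix.mulVec_zero]
  have hai : ∀ i : Fin d, i ≠ ⟨0, h0d⟩ → a i = 0 := by
    intro i hi
    have h1 : lam i * a i = 0 := by
      have := congrFun hDa i
      simpa [Matrix.mulVec_diagonal] using this
    have hvne : (i : ℕ) ≠ 0 := fun h => hi (Fin.ext h)
    have hile : (⟨1, h1d⟩ : Fin d) ≤ i := by
      rw [Fin.le_def]
      show 1 ≤ (i : ℕ)
      omega
    have h2 : 0 < lam i := lt_of_lt_of_le hlam2_pos (hlam_mono hile)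
    exact (mul_eq_zero.mp h1).resolve_left (ne_of_gt h2)
  have hc0 : c ⟨0, h0d⟩ = 0 := by
    have hdot : a ⬝ᵥ c = 0 := by
      have h1 : (fun _ => (1:ℝ)) ⬝ᵥ (Φ *ᵥ v) = 0 := by
        rw [hΦ]
        simp only [dotProduct, Matrix.mulVec_diagonal, one_mul]
        exact hv0
      rw [hone, Matrix.mulVec_transpose, ← Matrix.dotProduct_mulVec, ← hc] at h1
      exact h1
    have hsum : a ⬝ᵥ c = a ⟨0, h0d⟩ * c ⟨0, h0d⟩ := by
      rw [dotProduct]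
      exact Finset.sum_eq_single _ (fun i _ hi => by rw [hai i hi, zero_mul])
        (fun h => absurd (Finset.mem_univ _) h)
    have ha0 : a ⟨0, h0d⟩ ≠ 0 := by
      have hnorm1 : a ⬝ᵥ a = 1 := by
        have h2 : (fun _ => (1:ℝ)) ⬝ᵥ (Φ *ᵥ (fun _ => (1:ℝ))) = 1 := by
          rw [hΦ]
          simp only [dotProduct, Matrix.mulVec_diagonal, one_mul, mul_one]
          exact hφ_sum
        rw [hone, hform] at h2
        exact h2
      intro h0
      have : a ⬝ᵥ a = 0 := by
        rw [dotProduct]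
        apply Finset.sum_eq_zero
        intro i _
        by_cases hi : i = ⟨0, h0d⟩
        · rw [hi, h0, mul_zero]
        · rw [hai i hi, zero_mul]
      rw [this] at hnorm1
      norm_num at hnorm1
    have := hdot
    rw [hsum] at this
    exact (mul_eq_zero.mp this).resolve_left ha0
  -- sums and coefficients of v - vk
  set cc : Fin d → ℝ := fun i => if (i:ℕ) < k then 0 else c i with hccdef
  have hsumsplit : ∀ f : Fin d → ℝ,
      ∑ i : Fin k, f (Fin.castLE hkd.le i) = ∑ i : Fin d, if (i:ℕ) < k then f i else 0 := by
    intro f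
    set g : ℕ → ℝ := fun j => if h : j < d then f ⟨j, h⟩ else 0 with hg
    have h1 : ∑ i : Fin k, f (Fin.castLE hkd.le i) = ∑ j ∈ Finset.range k, g j := by
      rw [← Fin.sum_univ_eq_sum_range]
      apply Finset.sum_congr rfl
      intro i _
      have hik : (i:ℕ) < d := lt_trans i.isLt hkd
      simp only [hg, dif_pos hik]
      rfl
    have h2 : ∑ i : Fin d, (if (i:ℕ) < k then f i else 0)
        = ∑ j ∈ Finset.range d, (if j < k then g j else 0) := by
      rw [← Fin.sum_univ_eq_sum_range (fun j => if j < k then g j else 0) d]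
      apply Finset.sum_congr rfl
      intro i _
      by_cases h : (i:ℕ) < k
      · simp only [h, if_true, hg, dif_pos i.isLt, Fin.eta]
      · simp only [h, if_false]
    have h3 : ∑ j ∈ Finset.range k, g j = ∑ j ∈ Finset.range d, (if j < k then g j else 0) := by
      rw [← Finset.sum_subset (Finset.range_subset_range.mpr hkd.le)
        (fun x _ hx => by simp only [Finset.mem_range, not_lt] at hx; simp [not_lt.mpr hx])]
      apply Finset.sum_congr rfl
      intro j hj
      simp [Finset.mem_range.mp hj]
    rw [h1, h2, h3]
  have hvvk : v - vk = Uᵀ *ᵥ cc := by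
    have hvk2 : vk = fun s => ∑ i : Fin k, c (Fin.castLE hkd.le i) * u (Fin.castLE hkd.le i) s := by
      rw [hvk, ← Matrix.mulVec_mulVec, ← Matrix.mulVec_mulVec]
      funext s
      have hin : Ψᵀ *ᵥ (Φ *ᵥ v) = fun i : Fin k => c (Fin.castLE hkd.le i) := by
        funext i
        simp only [Matrix.mulVec, dotProduct, Matrix.transpose_apply, hΨ, Matrix.of_apply]
        rfl
      rw [hin]
      simp only [Matrix.mulVec, dotProduct, hΨ, Matrix.of_apply]
      exact Finset.sum_congr rfl fun i _ => by ring
    funext s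
    have hvs : v s = ∑ i : Fin d, c i * u i s := by
      rw [hvdec]
      simp only [Matrix.mulVec, dotProduct, Matrix.transpose_apply, hU, Matrix.of_apply]
      exact Finset.sum_congr rfl fun i _ => by ring
    have hr : (Uᵀ *ᵥ cc) s = ∑ i : Fin d, cc i * u i s := by
      simp only [Matrix.mulVec, dotProduct, Matrix.transpose_apply, hU, Matrix.of_apply]
      exact Finset.sum_congr rfl fun i _ => by ring
    have hsplit := hsumsplit (fun i => c i * u i s)
    simp only [Pi.sub_apply, hvs, hvk2, hr, hsplit]
    rw [← Finset.sum_sub_distrib]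
    apply Finset.sum_congr rfl
    intro i _
    by_cases h : (i:ℕ) < k <;> simp [hccdef, h]
  -- quadratic forms
  have hΦquad : ∀ x : Fin d → ℝ, x ⬝ᵥ (Φ *ᵥ x) = ∑ i, φ i * (x i)^2 := by
    intro x
    rw [hΦ]
    simp only [dotProduct, Matrix.mulVec_diagonal]
    exact Finset.sum_congr rfl fun i _ => by ring
  have hNw : (v - vk) ⬝ᵥ (Φ *ᵥ (v - vk)) = ∑ i, (cc i)^2 := by
    rw [hvvk, hform]
    simp only [dotProduct]
    exact Finset.sum_congr rfl fun i _ => by ring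
  have hNv : v ⬝ᵥ (Φ *ᵥ v) = ∑ i, (c i)^2 := by
    conv_lhs => rw [hvdec]
    rw [hform]
    simp only [dotProduct]
    exact Finset.sum_congr rfl fun i _ => by ring
  set Nw : ℝ := ∑ i, (cc i)^2 with hNwdef
  set Nv : ℝ := ∑ i, (c i)^2 with hNvdef
  set Nr : ℝ := ∑ i, φ i * (rbar i)^2 with hNrdef
  have hlam_nonneg : ∀ i, 0 ≤ lam i := by
    intro i
    have : (⟨0, h0d⟩ : Fin d) ≤ i := by
      rw [Fin.le_def]; show 0 ≤ (i : ℕ); omega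
    calc (0:ℝ) = lam ⟨0, h0d⟩ := hlam_zero.symm
      _ ≤ lam i := hlam_mono this
  have hNv0 : 0 ≤ Nv := Finset.sum_nonneg fun i _ => sq_nonneg _
  have hNr0 : 0 ≤ Nr := Finset.sum_nonneg fun i _ =>
    mul_nonneg (hφ_pos i).le (sq_nonneg _)
  have hS0 : 0 ≤ S := Finset.sum_nonneg fun i _ =>
    mul_nonneg (hlam_nonneg i) (sq_nonneg _)
  have hlamk_pos : 0 < lam ⟨k, hkd⟩ :=
    lt_of_lt_of_le hlam2_pos (hlam_mono (by rw [Fin.le_def]; show 1 ≤ k; exact hk1))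
  -- key inequalities
  have ineq1 : lam ⟨1, h1d⟩ * Nv ≤ S := by
    rw [hNvdef, Finset.mul_sum, hS]
    apply Finset.sum_le_sum
    intro i _
    by_cases hi : i = ⟨0, h0d⟩
    · rw [hi, hc0]; simp
    · have hvne : (i : ℕ) ≠ 0 := fun h => hi (Fin.ext h)
      have hile : (⟨1, h1d⟩ : Fin d) ≤ i := by
        rw [Fin.le_def]
        show 1 ≤ (i : ℕ)
        omega
      exact mul_le_mul_of_nonneg_right (hlam_mono hile) (sq_nonneg _)
  have ineq2 : lam ⟨k, hkd⟩ * Nw ≤ S := by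
    rw [hNwdef, Finset.mul_sum, hS]
    apply Finset.sum_le_sum
    intro i _
    by_cases hi : (i:ℕ) < k
    · simp only [hccdef, hi, if_true]
      have : (0:ℝ) ≤ lam i * (c i)^2 := mul_nonneg (hlam_nonneg i) (sq_nonneg _)
      simpa using this
    · simp only [hccdef, hi, if_false]
      have hile : (⟨k, hkd⟩ : Fin d) ≤ i := by
        rw [Fin.le_def]; show k ≤ (i : ℕ); omega
      exact mul_le_mul_of_nonneg_right (hlam_mono hile) (sq_nonneg _)
  have ineq3 : S^2 ≤ Nv * Nr := by
    have hSval : S = ∑ i, (Real.sqrt (φ i) * v i) * (Real.sqrt (φ i) * rbar i) := by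
      rw [hSr, hΦ]
      simp only [dotProduct, Matrix.mulVec_diagonal]
      apply Finset.sum_congr rfl
      intro i _
      have : Real.sqrt (φ i) * Real.sqrt (φ i) = φ i := Real.mul_self_sqrt (hφ_pos i).le
      calc v i * (φ i * rbar i) = (Real.sqrt (φ i) * Real.sqrt (φ i)) * (v i * rbar i) := by
            rw [this]; ring
        _ = (Real.sqrt (φ i) * v i) * (Real.sqrt (φ i) * rbar i) := by ring
    have hNvval : Nv = ∑ i, (Real.sqrt (φ i) * v i)^2 := by
      rw [← hNv, hΦquad]
      apply Finset.sum_congr rfl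
      intro i _
      rw [mul_pow, Real.sq_sqrt (hφ_pos i).le]
    have hNrval : Nr = ∑ i, (Real.sqrt (φ i) * rbar i)^2 := by
      rw [hNrdef]
      apply Finset.sum_congr rfl
      intro i _
      rw [mul_pow, Real.sq_sqrt (hφ_pos i).le]
    rw [hSval, hNvval, hNrval]
    exact Finset.sum_mul_sq_le_sq_mul_sq _ _ _
  have hmain : lam ⟨1, h1d⟩ * S ≤ Nr := by
    by_cases hSz : S = 0
    · rw [hSz, mul_zero]; exact hNr0
    · have hSpos : 0 < S := lt_of_le_of_ne hS0 (Ne.symm hSz)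
      have h1 : lam ⟨1, h1d⟩ * S^2 ≤ lam ⟨1, h1d⟩ * (Nv * Nr) :=
        mul_le_mul_of_nonneg_left ineq3 hlam2_pos.le
      have h2 : lam ⟨1, h1d⟩ * (Nv * Nr) ≤ S * Nr := by
        have := mul_le_mul_of_nonneg_right ineq1 hNr0
        calc lam ⟨1, h1d⟩ * (Nv * Nr) = lam ⟨1, h1d⟩ * Nv * Nr := by ring
          _ ≤ S * Nr := this
      have h3 : lam ⟨1, h1d⟩ * S * S ≤ Nr * S := by
        calc lam ⟨1, h1d⟩ * S * S = lam ⟨1, h1d⟩ * S^2 := by ring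
          _ ≤ S * Nr := h1.trans h2
          _ = Nr * S := by ring
      exact le_of_mul_le_mul_right h3 hSpos
  -- finish
  have hpn : ∀ x : Fin d → ℝ, (phiNorm Φ x)^2 = x ⬝ᵥ (Φ *ᵥ x) := by
    intro x
    rw [phiNorm, Real.sq_sqrt]
    rw [hΦquad]
    exact Finset.sum_nonneg fun i _ => mul_nonneg (hφ_pos i).le (sq_nonneg _)
  show (phiNorm Φ (v - vk)) ^ 2 ≤ (phiNorm Φ rbar) ^ 2 / (lam ⟨1, h1d⟩ * lam ⟨k, hkd⟩)
  rw [hpn, hpn, hNw, hΦquad rbar, ← hNrdef]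
  rw [le_div_iff₀ (mul_pos hlam2_pos hlamk_pos)]
  calc Nw * (lam ⟨1, h1d⟩ * lam ⟨k, hkd⟩) = lam ⟨1, h1d⟩ * (lam ⟨k, hkd⟩ * Nw) := by ring
    _ ≤ lam ⟨1, h1d⟩ * S := mul_le_mul_of_nonneg_left ineq2 hlam2_pos.le
    _ ≤ Nr := hmain
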